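/- arXiv:2005.01626 — 2 statements merged into one kernel-verified Lean document; each statement's English description precedes it below -/
import Mathlib

section
/- Let A be a length abelian category and W an extension-closed subcategory. Then W is a wide subcategory (closed under extensions, kernels, cokernels) if and only if simp(W) is a semibrick, and in that case W = Filt(simp W). Consequently simp and Filt restrict to mutually inverse bijections between wide subcategories of A and semibricks in A. -/
open CategoryTheory CategoryTheory.Limits

namespace MonobrickPaper

universe v u

variable {A : Type u} [Category.{v} A] [Abelian A]

/-- A set of objects closed under isomorphisms (models a set of iso-classes). -/
def IsoClosedSet (S : Set A) : Prop :=
  ∀ ⦃X Y : A⦄, (X ≅ Y) → X ∈ S → Y ∈ S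

/-- A brick: an object whose endomorphism ring is a division ring, phrased as:
nonzero and every nonzero endomorphism is an isomorphism. -/
def IsBrick (X : A) : Prop :=
  ¬ IsZero X ∧ ∀ f : X ⟶ X, f = 0 ∨ IsIso f

/-- A subcategory (set of objects) closed under extensions (containing the zero objects). -/
def ExtClosed (E : Set A) : Prop :=
  (∀ X : A, IsZero X → X ∈ E) ∧
  ∀ (S : ShortComplex A), S.ShortExact → S.X₁ ∈ E → S.X₃ ∈ E → S.X₂ ∈ E

/-- `M` is a simple object of `E`: nonzero, and admits no short exact sequence
`0 → L → M → N → 0` with `L, N` nonzero objects of `E`. -/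
def SimpleIn (E : Set A) (M : A) : Prop :=
  ¬ IsZero M ∧ ∀ ⦃L N : A⦄ (i : L ⟶ M) (p : M ⟶ N) (w : i ≫ p = 0),
    (ShortComplex.mk i p w).ShortExact → L ∈ E → N ∈ E → IsZero L ∨ IsZero N

/-- The set of simple objects of `E`. -/
def simpSet (E : Set A) : Set A := {X | X ∈ E ∧ SimpleIn E X}

/-- `M` is left Schurian for `E`: nonzero, and every morphism from `M` to an object
of `E` is zero or a monomorphism. -/
def LeftSchurianFor (E : Set A) (M : A) : Prop :=
  ¬ IsZero M ∧ ∀ ⦃X : A⦄, X ∈ E → ∀ f : M ⟶ X, f = 0 ∨ Mono f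

/-- A monobrick: an iso-closed set of bricks such that every morphism between its
members is zero or a monomorphism. -/
def IsMonobrick (M : Set A) : Prop :=
  IsoClosedSet M ∧ (∀ X ∈ M, IsBrick X) ∧
  ∀ ⦃X : A⦄, X ∈ M → ∀ ⦃Y : A⦄, Y ∈ M → ∀ f : X ⟶ Y, f = 0 ∨ Mono f

/-- A semibrick: an iso-closed set of bricks such that every morphism between its
members is zero or an isomorphism. -/
def IsSemibrick (S : Set A) : Prop :=
  IsoClosedSet S ∧ (∀ X ∈ S, IsBrick X) ∧
  ∀ ⦃X : A⦄, X ∈ S → ∀ ⦃Y : A⦄, Y ∈ S → ∀ f : X ⟶ Y, f = 0 ∨ IsIso f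

/-- Membership in the extension closure `Filt C`: objects admitting a finite filtration with
subquotients in `C`, generated by objects isomorphic to members of `C`, zero objects, and
extensions. -/
inductive FiltMem (C : Set A) : A → Prop
  | of_iso {X Y : A} (h : Y ∈ C) (e : X ≅ Y) : FiltMem C X
  | of_isZero {X : A} (h : IsZero X) : FiltMem C X
  | of_extension {S : ShortComplex A} (hS : S.ShortExact)
      (h1 : FiltMem C S.X₁) (h3 : FiltMem C S.X₃) : FiltMem C S.X₂

/-- The extension closure of `C`. -/
def Filt (C : Set A) : Set A := {X | FiltMem C X}

/-- A left Schur subcategory: extension-closed (and iso-closed), and every simple object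
is left Schurian. -/
def IsLeftSchur (E : Set A) : Prop :=
  IsoClosedSet E ∧ ExtClosed E ∧ ∀ M ∈ E, SimpleIn E M → LeftSchurianFor E M

/-- A torsion-free class: closed under extensions and subobjects. -/
def IsTorsionFreeClass (F : Set A) : Prop :=
  IsoClosedSet F ∧ ExtClosed F ∧
  ∀ ⦃X Y : A⦄ (f : X ⟶ Y), Mono f → Y ∈ F → X ∈ F

/-- A wide subcategory: closed under extensions, kernels and cokernels. -/
def IsWide (W : Set A) : Prop :=
  IsoClosedSet W ∧ ExtClosed W ∧
  (∀ ⦃X Y : A⦄ (f : X ⟶ Y), X ∈ W → Y ∈ W → kernel f ∈ W) ∧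
  (∀ ⦃X Y : A⦄ (f : X ⟶ Y), X ∈ W → Y ∈ W → cokernel f ∈ W)

/-- The submodule order: `X ≤ Y` iff there is a monomorphism `X ↪ Y`. -/
def subOrder (X Y : A) : Prop := ∃ f : X ⟶ Y, Mono f

/-- The set of maximal elements of `M` with respect to the submodule order
(maximality up to isomorphism of iso-classes). -/
def maxSet (M : Set A) : Set A :=
  {X | X ∈ M ∧ ∀ Y ∈ M, subOrder X Y → subOrder Y X}

/-- `N` is a cofinal extension of the monobrick `M`. -/
def IsCofinalExt (M N : Set A) : Prop :=
  IsMonobrick N ∧ M ⊆ N ∧ ∀ X ∈ N, ∃ Y ∈ M, subOrder X Y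

/-- A cofinally closed monobrick: no cofinal extension other than itself. -/
def IsCofinallyClosed (M : Set A) : Prop :=
  IsMonobrick M ∧ ∀ N : Set A, IsCofinalExt M N → N = M

/-- The cofinal closure of `M`: the union of all cofinal extensions of `M`. -/
def cofClosure (M : Set A) : Set A :=
  {X | ∃ N : Set A, IsCofinalExt M N ∧ X ∈ N}

/-- All subobjects of objects of `C`. -/
def subClosure (C : Set A) : Set A := {X | ∃ Y ∈ C, subOrder X Y}


/-! ### Basic helpers -/

lemma isZero_of_mono_eq_zero {X Y : A} (f : X ⟶ Y) [Mono f] (h : f = 0) : IsZero X := by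
  rw [IsZero.iff_id_eq_zero]
  rw [← cancel_mono f, h, comp_zero, comp_zero]

lemma isZero_of_epi_eq_zero {X Y : A} (f : X ⟶ Y) [Epi f] (h : f = 0) : IsZero Y := by
  rw [IsZero.iff_id_eq_zero]
  rw [← cancel_epi f, h, comp_zero, zero_comp]

lemma isZero_kernel_of_mono {X Y : A} (f : X ⟶ Y) [Mono f] : IsZero (kernel f) := by
  have h : kernel.ι f = 0 := by
    rw [← cancel_mono f, kernel.condition, zero_comp]
  exact isZero_of_mono_eq_zero (kernel.ι f) h

lemma isZero_cokernel_of_epi {X Y : A} (f : X ⟶ Y) [Epi f] : IsZero (cokernel f) := by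
  have h : cokernel.π f = 0 := by
    rw [← cancel_epi f, cokernel.condition, comp_zero]
  exact isZero_of_epi_eq_zero (cokernel.π f) h

lemma mono_of_isZero_kernel {X Y : A} (f : X ⟶ Y) (h : IsZero (kernel f)) : Mono f :=
  Abelian.mono_of_kernel_ι_eq_zero f (h.eq_zero_of_src _)

lemma epi_of_isZero_cokernel {X Y : A} (f : X ⟶ Y) (h : IsZero (cokernel f)) : Epi f :=
  Abelian.epi_of_cokernel_π_eq_zero f (h.eq_zero_of_tgt _)

/-- Transport a short exact sequence along an isomorphism of the middle object. -/
lemma shortExact_iso_middle {X Y L N : A} (e : X ≅ Y) {i : L ⟶ X} {p : X ⟶ N} {w : i ≫ p = 0}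
    (hS : (ShortComplex.mk i p w).ShortExact) :
    (ShortComplex.mk (i ≫ e.hom) (e.inv ≫ p)
      (by rw [Category.assoc, Iso.hom_inv_id_assoc, w])).ShortExact := by
  refine ShortComplex.shortExact_of_iso ?_ hS
  exact ShortComplex.isoMk (Iso.refl _) e (Iso.refl _) (by simp) (by simp)

/-- A mono together with its cokernel projection forms a short exact sequence. -/
lemma shortExact_of_mono {X Y : A} (f : X ⟶ Y) [Mono f] :
    (ShortComplex.mk f (cokernel.π f) (cokernel.condition f)).ShortExact :=
  ShortComplex.ShortExact.mk'
    (ShortComplex.exact_of_g_is_cokernel _ (cokernelIsCokernel f)) inferInstance inferInstance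

/-- An epi together with its kernel inclusion forms a short exact sequence. -/
lemma shortExact_of_epi {X Y : A} (f : X ⟶ Y) [Epi f] :
    (ShortComplex.mk (kernel.ι f) f (kernel.condition f)).ShortExact :=
  ShortComplex.ShortExact.mk'
    (ShortComplex.exact_of_f_is_kernel _ (kernelIsKernel f)) inferInstance inferInstance

lemma FiltMem.iso {C : Set A} {X Y : A} (h : FiltMem C X) (e : Y ≅ X) : FiltMem C Y := by
  induction h generalizing Y with
  | of_iso h e' => exact FiltMem.of_iso h (e.trans e')
  | of_isZero h => exact FiltMem.of_isZero (h.of_iso e)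
  | of_extension hS h1 h3 ih1 ih3 =>
    exact FiltMem.of_extension (shortExact_iso_middle e.symm hS) h1 h3

lemma filt_subset {E C : Set A} (hiso : IsoClosedSet E) (hext : ExtClosed E) (hCE : C ⊆ E) :
    Filt C ⊆ E := by
  intro X hX
  induction hX with
  | of_iso h e => exact hiso e.symm (hCE h)
  | of_isZero h => exact hext.1 _ h
  | of_extension hS h1 h3 ih1 ih3 => exact hext.2 _ hS ih1 ih3

/-! ### Graded filtrations -/

inductive FiltN (C : Set A) : ℕ → A → Prop
  | of_iso {X B : A} (h : B ∈ C) (e : X ≅ B) : FiltN C 1 X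
  | of_isZero {X : A} (h : IsZero X) : FiltN C 0 X
  | of_extension {m n : ℕ} {S : ShortComplex A} (hS : S.ShortExact)
      (h1 : FiltN C m S.X₁) (h3 : FiltN C n S.X₃) : FiltN C (m + n) S.X₂

lemma FiltN.iso {C : Set A} {n : ℕ} {X Y : A} (h : FiltN C n X) (e : Y ≅ X) : FiltN C n Y := by
  induction h generalizing Y with
  | of_iso h e' => exact FiltN.of_iso h (e.trans e')
  | of_isZero h => exact FiltN.of_isZero (h.of_iso e)
  | of_extension hS h1 h3 ih1 ih3 =>
    exact FiltN.of_extension (shortExact_iso_middle e.symm hS) h1 h3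

lemma FiltN.filtMem {C : Set A} {n : ℕ} {X : A} (h : FiltN C n X) : FiltMem C X := by
  induction h with
  | of_iso h e => exact FiltMem.of_iso h e
  | of_isZero h => exact FiltMem.of_isZero h
  | of_extension hS h1 h3 ih1 ih3 => exact FiltMem.of_extension hS ih1 ih3

lemma FiltMem.filtN {C : Set A} {X : A} (h : FiltMem C X) : ∃ n, FiltN C n X := by
  induction h with
  | of_iso h e => exact ⟨1, FiltN.of_iso h e⟩
  | of_isZero h => exact ⟨0, FiltN.of_isZero h⟩
  | of_extension hS h1 h3 ih1 ih3 =>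
    obtain ⟨m, hm⟩ := ih1
    obtain ⟨n, hn⟩ := ih3
    exact ⟨m + n, FiltN.of_extension hS hm hn⟩

lemma FiltN.zero_or_nonzero {C : Set A} (hC : ∀ B ∈ C, ¬ IsZero B)
    {n : ℕ} {X : A} (h : FiltN C n X) : (n = 0 → IsZero X) ∧ (n ≠ 0 → ¬ IsZero X) := by
  induction h with
  | @of_iso X B h e =>
    refine ⟨by simp, fun _ hz => hC B h (hz.of_iso e.symm)⟩
  | of_isZero h => exact ⟨fun _ => h, fun hn => absurd rfl hn⟩
  | @of_extension m n S hS h1 h3 ih1 ih3 =>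
    constructor
    · intro hmn
      obtain ⟨hm, hn⟩ : m = 0 ∧ n = 0 := by omega
      have h1z := ih1.1 hm
      have h3z := ih3.1 hn
      have hf : S.f = 0 := h1z.eq_zero_of_src _
      have : Mono S.g := hS.exact.mono_g hf
      exact isZero_of_mono_eq_zero S.g (h3z.eq_zero_of_tgt _)
    · intro hmn hz
      rcases Nat.eq_zero_or_pos m with hm | hm
      · have h3nz := ih3.2 (by omega)
        have := hS.epi_g
        exact h3nz (isZero_of_epi_eq_zero S.g (hz.eq_zero_of_src _))
      · have h1nz := ih1.2 (by omega)
        have := hS.mono_f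
        exact h1nz (isZero_of_mono_eq_zero S.f (hz.eq_zero_of_tgt _))

lemma FiltN.isZero {C : Set A} (hC : ∀ B ∈ C, ¬ IsZero B) {X : A} (h : FiltN C 0 X) : IsZero X :=
  (h.zero_or_nonzero hC).1 rfl

lemma FiltN.nonzero {C : Set A} (hC : ∀ B ∈ C, ¬ IsZero B) {n : ℕ} (hn : n ≠ 0) {X : A}
    (h : FiltN C n X) : ¬ IsZero X :=
  (h.zero_or_nonzero hC).2 hn

/-- Normal form for graded filtrations. -/
lemma FiltN.cases' {C : Set A} (hC : ∀ B ∈ C, ¬ IsZero B) {n : ℕ} {X : A} (h : FiltN C n X) :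
    (n = 0 ∧ IsZero X) ∨
    ((∃ B ∈ C, Nonempty (X ≅ B)) ∧ 1 ≤ n) ∨
    (∃ (S : ShortComplex A) (m k : ℕ), S.ShortExact ∧ FiltN C m S.X₁ ∧ FiltN C k S.X₃ ∧
      m + k = n ∧ 1 ≤ m ∧ 1 ≤ k ∧ Nonempty (X ≅ S.X₂)) := by
  induction h with
  | @of_iso X B h e => exact Or.inr (Or.inl ⟨⟨B, h, ⟨e⟩⟩, le_rfl⟩)
  | of_isZero h => exact Or.inl ⟨rfl, h⟩
  | @of_extension m k S hS h1 h3 ih1 ih3 =>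
    rcases Nat.eq_zero_or_pos m with hm | hm
    · -- X₁ is zero, so X₂ ≅ X₃
      subst hm
      have h1z := (h1.zero_or_nonzero hC).1 rfl
      have hf : S.f = 0 := h1z.eq_zero_of_src _
      have : Mono S.g := hS.exact.mono_g hf
      have : Epi S.g := hS.epi_g
      have : IsIso S.g := isIso_of_mono_of_epi _
      have e : S.X₂ ≅ S.X₃ := asIso S.g
      rcases ih3 with ⟨hk, hz⟩ | ⟨⟨B, hB, ⟨e'⟩⟩, hk⟩ | ⟨T, m', k', hT, hT1, hT3, hsum, hm', hk', ⟨e'⟩⟩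
      · exact Or.inl ⟨by omega, hz.of_iso e⟩
      · exact Or.inr (Or.inl ⟨⟨B, hB, ⟨e.trans e'⟩⟩, by omega⟩)
      · exact Or.inr (Or.inr ⟨T, m', k', hT, hT1, hT3, by omega, hm', hk', ⟨e.trans e'⟩⟩)
    rcases Nat.eq_zero_or_pos k with hk | hk
    · -- X₃ is zero, so X₂ ≅ X₁
      subst hk
      have h3z := (h3.zero_or_nonzero hC).1 rfl
      have hg : S.g = 0 := h3z.eq_zero_of_tgt _
      have : Epi S.f := hS.exact.epi_f hg
      have : Mono S.f := hS.mono_f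
      have : IsIso S.f := isIso_of_mono_of_epi _
      have e : S.X₂ ≅ S.X₁ := (asIso S.f).symm
      rcases ih1 with ⟨hm', hz⟩ | ⟨⟨B, hB, ⟨e'⟩⟩, hm'⟩ | ⟨T, m', k', hT, hT1, hT3, hsum, hm', hk', ⟨e'⟩⟩
      · exact Or.inl ⟨by omega, hz.of_iso e⟩
      · exact Or.inr (Or.inl ⟨⟨B, hB, ⟨e.trans e'⟩⟩, by omega⟩)
      · exact Or.inr (Or.inr ⟨T, m', k', hT, hT1, hT3, by omega, hm', hk', ⟨e.trans e'⟩⟩)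
    · exact Or.inr (Or.inr ⟨S, m, k, hS, h1, h3, rfl, hm, hk, ⟨Iso.refl _⟩⟩)

/-! ### Wide implies semibrick -/

lemma wide_hom_mono_or_zero {W : Set A} (hW : IsWide W) {M X : A} (hM : M ∈ W)
    (hMs : SimpleIn W M) (hX : X ∈ W) (f : M ⟶ X) : f = 0 ∨ Mono f := by
  have hker : kernel f ∈ W := hW.2.2.1 f hM hX
  have hcok : cokernel f ∈ W := hW.2.2.2 f hM hX
  have himg : kernel (cokernel.π f) ∈ W := hW.2.2.1 (cokernel.π f) hX hcok
  have hcoim : Abelian.coimage f ∈ W :=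
    hW.1 (Abelian.coimageIsoImage f).symm himg
  have hSES := shortExact_of_mono (kernel.ι f)
  rcases hMs.2 (kernel.ι f) (cokernel.π (kernel.ι f)) (cokernel.condition _) hSES hker hcoim with
    h | h
  · exact Or.inr (mono_of_isZero_kernel f h)
  · left
    have := Abelian.coimage.fac f
    rw [← this, h.eq_zero_of_src (Abelian.factorThruCoimage f), comp_zero]

lemma wide_iso_of_mono {W : Set A} (hW : IsWide W) {M N : A} (hN : N ∈ W)
    (hNs : SimpleIn W N) (hM : M ∈ W) (hMnz : ¬ IsZero M) (f : M ⟶ N) [Mono f] : IsIso f := by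
  have hcok : cokernel f ∈ W := hW.2.2.2 f hM hN
  rcases hNs.2 f (cokernel.π f) (cokernel.condition f) (shortExact_of_mono f) hM hcok with h | h
  · exact absurd h hMnz
  · have := epi_of_isZero_cokernel f h
    exact isIso_of_mono_of_epi f

lemma simpleIn_iso {E : Set A} {M N : A} (h : SimpleIn E M) (e : N ≅ M) : SimpleIn E N := by
  refine ⟨fun hz => h.1 (hz.of_iso e.symm), fun L N' i p w hS hL hN' => ?_⟩
  exact h.2 (i ≫ e.hom) (e.inv ≫ p) _ (shortExact_iso_middle e hS) hL hN'

lemma wide_simp_semibrick {W : Set A} (hW : IsWide W) : IsSemibrick (simpSet W) := by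
  refine ⟨?_, ?_, ?_⟩
  · intro X Y e hX
    exact ⟨hW.1 e hX.1, simpleIn_iso hX.2 e.symm⟩
  · intro M hM
    refine ⟨hM.2.1, fun f => ?_⟩
    rcases wide_hom_mono_or_zero hW hM.1 hM.2 hM.1 f with h | h
    · exact Or.inl h
    · haveI := h
      exact Or.inr (wide_iso_of_mono hW hM.1 hM.2 hM.1 hM.2.1 f)
  · intro M hM N hN f
    rcases wide_hom_mono_or_zero hW hM.1 hM.2 hN.1 f with h | h
    · exact Or.inl h
    · haveI := h
      exact Or.inr (wide_iso_of_mono hW hN.1 hN.2 hM.1 hM.2.1 f)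

/-! ### Bricks at the bottom and top of filtered objects -/

lemma exists_mono_brick {S : Set A} {X : A} (h : FiltMem S X) (hnz : ¬ IsZero X) :
    ∃ B ∈ S, ∃ f : B ⟶ X, Mono f := by
  induction h with
  | of_iso h e => exact ⟨_, h, e.inv, inferInstance⟩
  | of_isZero h => exact absurd h hnz
  | @of_extension T hT h1 h3 ih1 ih3 =>
    by_cases h1z : IsZero T.X₁
    · have hf : T.f = 0 := h1z.eq_zero_of_src _
      have : Mono T.g := hT.exact.mono_g hf
      have : Epi T.g := hT.epi_g
      have : IsIso T.g := isIso_of_mono_of_epi _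
      have hnz3 : ¬ IsZero T.X₃ := fun hz => hnz (hz.of_iso (asIso T.g))
      obtain ⟨B, hB, f, hfm⟩ := ih3 hnz3
      exact ⟨B, hB, f ≫ inv T.g, by haveI := hfm; exact mono_comp _ _⟩
    · obtain ⟨B, hB, f, hfm⟩ := ih1 h1z
      have := hT.mono_f
      exact ⟨B, hB, f ≫ T.f, by haveI := hfm; exact mono_comp _ _⟩

lemma exists_epi_brick {S : Set A} {X : A} (h : FiltMem S X) (hnz : ¬ IsZero X) :
    ∃ B ∈ S, ∃ f : X ⟶ B, Epi f := by
  induction h with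
  | of_iso h e => exact ⟨_, h, e.hom, inferInstance⟩
  | of_isZero h => exact absurd h hnz
  | @of_extension T hT h1 h3 ih1 ih3 =>
    by_cases h3z : IsZero T.X₃
    · have hg : T.g = 0 := h3z.eq_zero_of_tgt _
      have : Epi T.f := hT.exact.epi_f hg
      have : Mono T.f := hT.mono_f
      have : IsIso T.f := isIso_of_mono_of_epi _
      have hnz1 : ¬ IsZero T.X₁ := fun hz => hnz (hz.of_iso (asIso T.f).symm)
      obtain ⟨B, hB, f, hfe⟩ := ih1 hnz1
      exact ⟨B, hB, inv T.f ≫ f, by haveI := hfe; exact epi_comp _ _⟩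
    · obtain ⟨B, hB, f, hfe⟩ := ih3 h3z
      have := hT.epi_g
      exact ⟨B, hB, T.g ≫ f, by haveI := hfe; exact epi_comp _ _⟩

/-! ### Simple objects of `Filt S` for a semibrick `S` -/

lemma semibrick_nonzero {S : Set A} (hS : IsSemibrick S) : ∀ B ∈ S, ¬ IsZero B :=
  fun B hB => (hS.2.1 B hB).1

lemma semibrick_simp_filt {S : Set A} (hS : IsSemibrick S) : simpSet (Filt S) = S := by
  ext X
  constructor
  · rintro ⟨hX, hXs⟩
    obtain ⟨n, hn⟩ := FiltMem.filtN hX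
    rcases hn.cases' (semibrick_nonzero hS) with ⟨_, hz⟩ | ⟨⟨B, hB, ⟨e⟩⟩, _⟩ |
      ⟨T, m, k, hT, hT1, hT3, hsum, hm, hk, ⟨e⟩⟩
    · exact absurd hz hXs.1
    · exact hS.1 e.symm hB
    · exfalso
      have hSES := shortExact_iso_middle e.symm hT
      rcases hXs.2 (T.f ≫ e.symm.hom) (e.symm.inv ≫ T.g) _ hSES hT1.filtMem hT3.filtMem with
        h | h
      · exact hT1.nonzero (semibrick_nonzero hS) (by omega) h
      · exact hT3.nonzero (semibrick_nonzero hS) (by omega) h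
  · intro hX
    have hXF : X ∈ Filt S := FiltMem.of_iso hX (Iso.refl X)
    refine ⟨hXF, (hS.2.1 X hX).1, ?_⟩
    intro L N i p w hSES hL hN
    by_contra hc
    push_neg at hc
    obtain ⟨hLnz, hNnz⟩ := hc
    obtain ⟨B, hB, m, hm⟩ := exists_mono_brick hL hLnz
    have := hSES.mono_f
    have hgm : Mono (m ≫ i) := by haveI := hm; exact mono_comp _ _
    have hgnz : m ≫ i ≠ 0 := by
      intro h0
      exact (hS.2.1 B hB).1 (by haveI := hgm; exact isZero_of_mono_eq_zero (m ≫ i) h0)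
    rcases hS.2.2 hB hX (m ≫ i) with h | h
    · exact hgnz h
    · -- m ≫ i iso, so i is epi, so p = 0, so N is zero
      have : Epi i := by
        haveI := h
        exact epi_of_epi m i
      have hp0 : p = 0 := by rw [← cancel_epi i, w, comp_zero]
      have := hSES.epi_g
      exact hNnz (isZero_of_epi_eq_zero p hp0)

/-! ### Ringel's theorem: `Filt S` of a semibrick is closed under kernels and cokernels -/

section Ringel

open CategoryTheory.Abelian.Pseudoelement

attribute [local instance] CategoryTheory.Abelian.Pseudoelement.objectToSort
  CategoryTheory.Abelian.Pseudoelement.homToFun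

lemma exact_kernel_seq {X Y : A} (f : X ⟶ Y) :
    (ShortComplex.mk (kernel.ι f) f (kernel.condition f)).Exact :=
  ShortComplex.exact_of_f_is_kernel _ (kernelIsKernel f)

lemma exact_cokernel_seq {X Y : A} (f : X ⟶ Y) :
    (ShortComplex.mk f (cokernel.π f) (cokernel.condition f)).Exact :=
  ShortComplex.exact_of_g_is_cokernel _ (cokernelIsCokernel f)

lemma pseudo_kernel_exact {X Y : A} (f : X ⟶ Y) :
    ∀ x : X, pseudoApply f x = 0 → ∃ k : (kernel f : A), pseudoApply (kernel.ι f) k = x :=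
  pseudo_exact_of_exact (exact_kernel_seq f)

lemma pseudo_cokernel_exact {X Y : A} (f : X ⟶ Y) :
    ∀ y : Y, pseudoApply (cokernel.π f) y = 0 → ∃ x : X, pseudoApply f x = y :=
  pseudo_exact_of_exact (exact_cokernel_seq f)

lemma filtN_hom_zero {C : Set A} {a b : ℕ} {X Y : A} (f : X ⟶ Y) (hf : f = 0)
    (hX : FiltN C a X) (hY : FiltN C b Y) :
    (∃ k, k ≤ a ∧ FiltN C k (kernel f)) ∧ (∃ c, c ≤ b ∧ FiltN C c (cokernel f)) := by
  subst hf
  exact ⟨⟨a, le_rfl, hX.iso kernelZeroIsoSource⟩, ⟨b, le_rfl, hY.iso cokernelZeroIsoTarget⟩⟩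

lemma filtN_hom_isIso {C : Set A} {a b : ℕ} {X Y : A} (f : X ⟶ Y) [IsIso f] :
    (∃ k, k ≤ a ∧ FiltN C k (kernel f)) ∧ (∃ c, c ≤ b ∧ FiltN C c (cokernel f)) :=
  ⟨⟨0, Nat.zero_le _, FiltN.of_isZero (isZero_kernel_of_mono f)⟩,
   ⟨0, Nat.zero_le _, FiltN.of_isZero (isZero_cokernel_of_epi f)⟩⟩

lemma ringel_aux {S : Set A} (hS : IsSemibrick S) :
    ∀ (n a b : ℕ) {X Y : A} (f : X ⟶ Y), a + b ≤ n → FiltN S a X → FiltN S b Y →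
      (∃ k, k ≤ a ∧ FiltN S k (kernel f)) ∧ (∃ c, c ≤ b ∧ FiltN S c (cokernel f)) := by
  have hC := semibrick_nonzero hS
  intro n
  induction n with
  | zero =>
    intro a b X Y f hab hX hY
    have ha : a = 0 := by omega
    subst ha
    exact filtN_hom_zero f ((hX.isZero hC).eq_zero_of_src f) hX hY
  | succ n ih =>
    intro a b X Y f hab hX hY
    rcases hX.cases' hC with ⟨ha0, hXz⟩ | ⟨⟨BX, hBX, ⟨eX⟩⟩, haX⟩ |
      ⟨T, a₁, a₃, hT, hT1, hT3, hasum, ha₁, ha₃, ⟨eX⟩⟩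
    · exact filtN_hom_zero f (hXz.eq_zero_of_src f) hX hY
    · -- X is (isomorphic to) a brick
      rcases hY.cases' hC with ⟨hb0, hYz⟩ | ⟨⟨BY, hBY, ⟨eY⟩⟩, hbY⟩ |
        ⟨U, b₁, b₃, hU, hU1, hU3, hbsum, hb₁, hb₃, ⟨eY⟩⟩
      · exact filtN_hom_zero f (hYz.eq_zero_of_tgt f) hX hY
      · -- brick to brick
        have hfeq : f = eX.hom ≫ (eX.inv ≫ f ≫ eY.hom) ≫ eY.inv := by simp
        rcases hS.2.2 hBX hBY (eX.inv ≫ f ≫ eY.hom) with h | h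
        · refine filtN_hom_zero f ?_ hX hY
          rw [hfeq, h]
          simp
        · have : IsIso f := by
            rw [hfeq]
            infer_instance
          exact filtN_hom_isIso f
      · -- Case E : target is a nontrivial extension
        have := hU.mono_f
        have := hU.epi_g
        set f' : X ⟶ U.X₂ := f ≫ eY.hom with hf'
        obtain ⟨⟨k', hk', hFk'⟩, ⟨c', hc', hFc'⟩⟩ :=
          ih a b₃ (f' ≫ U.g) (by omega) hX hU3
        obtain ⟨h', hh'⟩ := hU.exact.lift' (kernel.ι (f' ≫ U.g) ≫ f')
          ((Category.assoc _ _ _).trans (kernel.condition _))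
        obtain ⟨⟨kh, hkh, hFkh⟩, ⟨ch, hch, hFch⟩⟩ := ih k' b₁ h' (by omega) hFk' hU1
        constructor
        · -- kernel f ≅ kernel h'
          have w₀ : (kernel.ι h' ≫ kernel.ι (f' ≫ U.g)) ≫ f' = 0 := by
            have e1 : (kernel.ι h' ≫ kernel.ι (f' ≫ U.g)) ≫ f' =
                kernel.ι h' ≫ (kernel.ι (f' ≫ U.g) ≫ f') := Category.assoc _ _ _
            have e2 : kernel.ι h' ≫ (kernel.ι (f' ≫ U.g) ≫ f') =
                (kernel.ι h' ≫ h') ≫ U.f := by rw [← hh']; exact (Category.assoc _ _ _).symm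
            rw [e1, e2, kernel.condition, zero_comp]
          have hlim : IsLimit (KernelFork.ofι _ w₀) := by
            refine KernelFork.IsLimit.ofι' (kernel.ι h' ≫ kernel.ι (f' ≫ U.g)) w₀ ?_
            intro T' k hk
            have hk1 : k ≫ f' ≫ U.g = 0 := by
              rw [← Category.assoc k f' U.g, hk, zero_comp]
            have hk2 : kernel.lift (f' ≫ U.g) k hk1 ≫ h' = 0 := by
              rw [← cancel_mono U.f, Category.assoc _ h' U.f, hh',
                ← Category.assoc _ (kernel.ι (f' ≫ U.g)) f', kernel.lift_ι, hk, zero_comp]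
            refine ⟨kernel.lift h' _ hk2, ?_⟩
            rw [← Category.assoc, kernel.lift_ι, kernel.lift_ι]
          have eK : (kernel f' : A) ≅ kernel h' :=
            IsLimit.conePointUniqueUpToIso (kernelIsKernel f') hlim
          have eK2 : (kernel f : A) ≅ kernel h' := (kernelCompMono f eY.hom).symm ≪≫ eK
          exact ⟨kh, by omega, hFkh.iso eK2⟩
        · -- cokernel f is an extension of cokernel h' and cokernel (f' ≫ U.g)
          have wγ : h' ≫ U.f ≫ cokernel.π f' = 0 := by
            rw [← Category.assoc h' U.f _, hh', Category.assoc _ f' _,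
              cokernel.condition, comp_zero]
          have wδ : f' ≫ U.g ≫ cokernel.π (f' ≫ U.g) = 0 := by
            rw [← Category.assoc f' U.g _]
            exact cokernel.condition _
          set γ : (cokernel h' : A) ⟶ cokernel f' := cokernel.desc h' _ wγ with hγdef
          set δ : (cokernel f' : A) ⟶ cokernel (f' ≫ U.g) := cokernel.desc f' _ wδ with hδdef
          have hγ : cokernel.π h' ≫ γ = U.f ≫ cokernel.π f' := cokernel.π_desc _ _ _
          have hδ : cokernel.π f' ≫ δ = U.g ≫ cokernel.π (f' ≫ U.g) := cokernel.π_desc _ _ _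
          have wγδ : γ ≫ δ = 0 := by
            rw [← cancel_epi (cokernel.π h'), ← Category.assoc _ γ δ, hγ,
              Category.assoc U.f _ δ, hδ, ← Category.assoc U.f U.g _, U.zero,
              zero_comp, comp_zero]
          have hδepi : Epi δ := by
            have h1 : Epi (cokernel.π f' ≫ δ) := by
              rw [hδ]
              exact epi_comp _ _
            exact epi_of_epi (cokernel.π f') δ
          have hγmono : Mono γ := by
            apply mono_of_zero_of_map_zero
            intro x hx
            obtain ⟨y₁, hy₁⟩ := pseudo_surjective_of_epi (cokernel.π h') x
            have e1 : pseudoApply (cokernel.π f') (pseudoApply U.f y₁) = 0 := by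
              rw [← Abelian.Pseudoelement.comp_apply, ← hγ,
                Abelian.Pseudoelement.comp_apply, hy₁, hx]
            obtain ⟨x', hx'⟩ := pseudo_cokernel_exact f' _ e1
            have e2 : pseudoApply (f' ≫ U.g) x' = 0 := by
              rw [Abelian.Pseudoelement.comp_apply, hx',
                ← Abelian.Pseudoelement.comp_apply, U.zero, Abelian.Pseudoelement.zero_apply]
            obtain ⟨k, hk⟩ := pseudo_kernel_exact (f' ≫ U.g) x' e2
            have e3 : pseudoApply U.f (pseudoApply h' k) = pseudoApply U.f y₁ := by
              rw [← Abelian.Pseudoelement.comp_apply, hh',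
                Abelian.Pseudoelement.comp_apply, hk, hx']
            have e4 : pseudoApply h' k = y₁ := pseudo_injective_of_mono U.f e3
            rw [← hy₁, ← e4, ← Abelian.Pseudoelement.comp_apply, cokernel.condition,
              Abelian.Pseudoelement.zero_apply]
          have hexact : (ShortComplex.mk γ δ wγδ).Exact := by
            apply exact_of_pseudo_exact
            intro x hx
            have hx' : pseudoApply δ x = 0 := hx
            obtain ⟨y, hy⟩ := pseudo_surjective_of_epi (cokernel.π f') x
            have e1 : pseudoApply (cokernel.π (f' ≫ U.g)) (pseudoApply U.g y) = 0 := by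
              rw [← Abelian.Pseudoelement.comp_apply, ← hδ,
                Abelian.Pseudoelement.comp_apply, hy, hx']
            obtain ⟨x', hx2⟩ := pseudo_cokernel_exact (f' ≫ U.g) _ e1
            have e2 : pseudoApply U.g y = pseudoApply U.g (pseudoApply f' x') := by
              rw [← hx2, Abelian.Pseudoelement.comp_apply]
            obtain ⟨z, hz0, hz⟩ := sub_of_eq_image U.g y (pseudoApply f' x') e2
            obtain ⟨y₁, hy₁⟩ := pseudo_exact_of_exact hU.exact z hz0
            refine ⟨pseudoApply (cokernel.π h') y₁, ?_⟩
            show pseudoApply γ (pseudoApply (cokernel.π h') y₁) = x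
            have e3 : pseudoApply (cokernel.π f') (pseudoApply f' x') = 0 := by
              rw [← Abelian.Pseudoelement.comp_apply, cokernel.condition,
                Abelian.Pseudoelement.zero_apply]
            rw [← Abelian.Pseudoelement.comp_apply, hγ,
              Abelian.Pseudoelement.comp_apply, hy₁, hz _ (cokernel.π f') e3, hy]
          have hses : (ShortComplex.mk γ δ wγδ).ShortExact :=
            ShortComplex.ShortExact.mk' hexact hγmono hδepi
          have hco : FiltN S (ch + c') (cokernel f') :=
            FiltN.of_extension hses hFch hFc'
          have eC : (cokernel f : A) ≅ cokernel f' := (cokernelCompIsIso f eY.hom).symm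
          exact ⟨ch + c', by omega, hco.iso eC⟩
    · -- Case D : source is a nontrivial extension
      have := hT.mono_f
      have := hT.epi_g
      set f' : T.X₂ ⟶ Y := eX.inv ≫ f with hf'
      obtain ⟨⟨k₁, hk₁, hFk₁⟩, ⟨c₁, hc₁, hFc₁⟩⟩ := ih a₁ b (T.f ≫ f') (by omega) hT1 hY
      obtain ⟨h, hh⟩ := hT.exact.desc' (f' ≫ cokernel.π (T.f ≫ f'))
        (by rw [← Category.assoc T.f f' _]; exact cokernel.condition _)
      obtain ⟨⟨k₃, hk₃, hFk₃⟩, ⟨c₃, hc₃, hFc₃⟩⟩ := ih a₃ c₁ h (by omega) hT3 hFc₁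
      constructor
      · -- kernel f is an extension of kernel (T.f ≫ f') and kernel h
        have wα : (kernel.ι (T.f ≫ f') ≫ T.f) ≫ f' = 0 :=
          (Category.assoc _ _ _).trans (kernel.condition _)
        have wβ : (kernel.ι f' ≫ T.g) ≫ h = 0 := by
          rw [Category.assoc _ T.g h, hh, ← Category.assoc _ f' _, kernel.condition,
            zero_comp]
        set α : (kernel (T.f ≫ f') : A) ⟶ kernel f' := kernel.lift f' _ wα with hαdef
        set β : (kernel f' : A) ⟶ kernel h := kernel.lift h _ wβ with hβdef
        have hα : α ≫ kernel.ι f' = kernel.ι (T.f ≫ f') ≫ T.f := kernel.lift_ι _ _ _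
        have hβ : β ≫ kernel.ι h = kernel.ι f' ≫ T.g := kernel.lift_ι _ _ _
        have wαβ : α ≫ β = 0 := by
          rw [← cancel_mono (kernel.ι h), Category.assoc α β _, hβ,
            ← Category.assoc α _ T.g, hα, Category.assoc _ T.f T.g, T.zero, comp_zero,
            zero_comp]
        have hαmono : Mono α := by
          have h1 : Mono (α ≫ kernel.ι f') := by
            rw [hα]
            exact mono_comp _ _
          exact mono_of_mono α (kernel.ι f')
        have hβepi : Epi β := by
          apply epi_of_pseudo_surjective
          intro x
          obtain ⟨z, hz⟩ := pseudo_surjective_of_epi T.g (pseudoApply (kernel.ι h) x)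
          have e1 : pseudoApply (cokernel.π (T.f ≫ f')) (pseudoApply f' z) = 0 := by
            rw [← Abelian.Pseudoelement.comp_apply, ← hh,
              Abelian.Pseudoelement.comp_apply, hz, ← Abelian.Pseudoelement.comp_apply,
              kernel.condition, Abelian.Pseudoelement.zero_apply]
          obtain ⟨x₁, hx₁⟩ := pseudo_cokernel_exact (T.f ≫ f') _ e1
          have e2 : pseudoApply f' z = pseudoApply f' (pseudoApply T.f x₁) := by
            rw [← hx₁, Abelian.Pseudoelement.comp_apply]
          obtain ⟨z', hz'0, hz'⟩ := sub_of_eq_image f' z (pseudoApply T.f x₁) e2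
          have e3 : pseudoApply T.g (pseudoApply T.f x₁) = 0 := by
            rw [← Abelian.Pseudoelement.comp_apply, T.zero, Abelian.Pseudoelement.zero_apply]
          obtain ⟨v, hv⟩ := pseudo_kernel_exact f' z' hz'0
          refine ⟨v, ?_⟩
          apply pseudo_injective_of_mono (kernel.ι h)
          rw [← Abelian.Pseudoelement.comp_apply, hβ,
            Abelian.Pseudoelement.comp_apply, hv, hz' _ T.g e3, hz]
        have hexact : (ShortComplex.mk α β wαβ).Exact := by
          apply exact_of_pseudo_exact
          intro x hx
          have hx' : pseudoApply β x = 0 := hx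
          have e1 : pseudoApply T.g (pseudoApply (kernel.ι f') x) = 0 := by
            rw [← Abelian.Pseudoelement.comp_apply, ← hβ,
              Abelian.Pseudoelement.comp_apply, hx', Abelian.Pseudoelement.apply_zero]
          obtain ⟨x₁, hx₁⟩ := pseudo_exact_of_exact hT.exact _ e1
          have e2 : pseudoApply (T.f ≫ f') x₁ = 0 := by
            rw [Abelian.Pseudoelement.comp_apply, hx₁,
              ← Abelian.Pseudoelement.comp_apply, kernel.condition,
              Abelian.Pseudoelement.zero_apply]
          obtain ⟨v, hv⟩ := pseudo_kernel_exact (T.f ≫ f') x₁ e2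
          refine ⟨v, ?_⟩
          show pseudoApply α v = x
          apply pseudo_injective_of_mono (kernel.ι f')
          rw [← Abelian.Pseudoelement.comp_apply, hα,
            Abelian.Pseudoelement.comp_apply, hv, hx₁]
        have hses : (ShortComplex.mk α β wαβ).ShortExact :=
          ShortComplex.ShortExact.mk' hexact hαmono hβepi
        have hk : FiltN S (k₁ + k₃) (kernel f') := FiltN.of_extension hses hFk₁ hFk₃
        have eK : (kernel f : A) ≅ kernel f' := (kernelIsIsoComp eX.inv f).symm
        exact ⟨k₁ + k₃, by omega, hk.iso eK⟩
      · -- cokernel f ≅ cokernel h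
        have wr : (T.f ≫ f') ≫ cokernel.π f' = 0 := by
          rw [Category.assoc T.f f' _, cokernel.condition, comp_zero]
        set r : (cokernel (T.f ≫ f') : A) ⟶ cokernel f' :=
          cokernel.desc _ (cokernel.π f') wr with hrdef
        have hr : cokernel.π (T.f ≫ f') ≫ r = cokernel.π f' := cokernel.π_desc _ _ _
        have wcol : (f' ≫ cokernel.π (T.f ≫ f')) ≫ r = 0 := by
          rw [Category.assoc f' _ r, hr, cokernel.condition]
        have hcol : IsColimit (CokernelCofork.ofπ r wcol) := by
          refine CokernelCofork.IsColimit.ofπ r wcol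
            (fun {Z'} k hk => cokernel.desc f' (cokernel.π (T.f ≫ f') ≫ k)
              (by rw [← Category.assoc f' _ k]; exact hk)) ?_ ?_
          · intro Z' k hk
            rw [← cancel_epi (cokernel.π (T.f ≫ f')), ← Category.assoc _ r _, hr,
              cokernel.π_desc]
          · intro Z' k hk m hm
            rw [← cancel_epi (cokernel.π f'), cokernel.π_desc, ← hr,
              Category.assoc _ r m, hm]
        have e₁ : (cokernel (f' ≫ cokernel.π (T.f ≫ f')) : A) ≅ cokernel f' :=
          IsColimit.coconePointUniqueUpToIso (cokernelIsCokernel _) hcol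
        have e₂ : (cokernel (T.g ≫ h) : A) ≅ cokernel (f' ≫ cokernel.π (T.f ≫ f')) :=
          cokernelIsoOfEq hh
        have e₃ : (cokernel (T.g ≫ h) : A) ≅ cokernel h := cokernelEpiComp T.g h
        have eC : (cokernel f : A) ≅ cokernel h :=
          (cokernelEpiComp eX.inv f).symm ≪≫ e₁.symm ≪≫ e₂.symm ≪≫ e₃
        exact ⟨c₃, by omega, hFc₃.iso eC⟩

end Ringel

/-! ### Every object of an extension-closed subcategory is filtered by its simples -/

section FiltSimp

open CategoryTheory.Abelian.Pseudoelement

attribute [local instance] CategoryTheory.Abelian.Pseudoelement.objectToSort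
  CategoryTheory.Abelian.Pseudoelement.homToFun

lemma subquot_wf [∀ X : A, IsNoetherianObject X] [∀ X : A, IsArtinianObject X] (X : A) :
    WellFounded (fun p q : Subobject X × Subobject X =>
      p.1 ≤ q.1 ∧ q.2 ≤ p.2 ∧ p ≠ q) := by
  have h1 : WellFounded ((· < ·) : Subobject X → Subobject X → Prop) :=
    wellFounded_lt
  have h2 : WellFounded ((· > ·) : Subobject X → Subobject X → Prop) :=
    wellFounded_gt
  refine Subrelation.wf ?_ (WellFounded.prod_lex h1 h2)
  rintro ⟨pa, pb⟩ ⟨qa, qb⟩ ⟨hle, hge, hne⟩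
  rcases eq_or_lt_of_le hle with heq | hlt
  · subst heq
    have hne2 : pb ≠ qb := fun hb => hne (by rw [hb])
    exact Prod.Lex.right _ (lt_of_le_of_ne hge hne2.symm : qb < pb)
  · exact Prod.Lex.left _ _ hlt

lemma ext_closed_filt_simp [∀ X : A, IsNoetherianObject X] [∀ X : A, IsArtinianObject X]
    {E : Set A} (hiso : IsoClosedSet E) (hext : ExtClosed E) :
    ∀ X ∈ E, FiltMem (simpSet E) X := by
  intro X hXE
  suffices main : ∀ p : Subobject X × Subobject X, ∀ hle : p.2 ≤ p.1, ∀ Z : A,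
      (Z ≅ cokernel (Subobject.ofLE p.2 p.1 hle)) → Z ∈ E → FiltMem (simpSet E) Z by
    have hbot : IsZero ((⊥ : Subobject X) : A) :=
      (isZero_zero A).of_iso Subobject.botCoeIsoZero
    have h0 : Subobject.ofLE (⊥ : Subobject X) ⊤ bot_le = 0 := hbot.eq_zero_of_src _
    have e : X ≅ cokernel (Subobject.ofLE (⊥ : Subobject X) ⊤ bot_le) :=
      (asIso (⊤ : Subobject X).arrow).symm ≪≫ cokernelZeroIsoTarget.symm ≪≫
        (cokernelIsoOfEq h0).symm
    exact main (⊤, ⊥) bot_le X e hXE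
  intro p
  refine (subquot_wf X).induction (C := fun p => ∀ hle : p.2 ≤ p.1, ∀ Z : A,
      (Z ≅ cokernel (Subobject.ofLE p.2 p.1 hle)) → Z ∈ E → FiltMem (simpSet E) Z) p ?_
  clear p
  rintro ⟨A₀, B₀⟩ IH hle Z e hZ
  dsimp only at hle e IH ⊢
  by_cases hz : IsZero Z
  · exact FiltMem.of_isZero hz
  by_cases hsimp : SimpleIn E Z
  · exact FiltMem.of_iso (show Z ∈ simpSet E from ⟨hZ, hsimp⟩) (Iso.refl Z)
  have hnall : ¬ ∀ ⦃L N : A⦄ (i : L ⟶ Z) (p : Z ⟶ N) (w : i ≫ p = 0),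
      (ShortComplex.mk i p w).ShortExact → L ∈ E → N ∈ E → IsZero L ∨ IsZero N :=
    fun hall => hsimp ⟨hz, hall⟩
  push_neg at hnall
  obtain ⟨L, N, i, p, w, hses, hL, hN, hLnz, hNnz⟩ := hnall
  have hses' := shortExact_iso_middle e hses
  have hmono' : Mono (i ≫ e.hom) := hses'.mono_f
  have hepi' : Epi (e.inv ≫ p) := hses'.epi_g
  have hi'p' : (i ≫ e.hom) ≫ (e.inv ≫ p) = 0 := by
    rw [Category.assoc i e.hom _, Iso.hom_inv_id_assoc, w]
  have hκm : Mono (kernel.ι (cokernel.π (Subobject.ofLE B₀ A₀ hle) ≫ e.inv ≫ p) ≫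
      A₀.arrow) := mono_comp _ _
  -- the subobject A' between B₀ and A₀
  have hA'A : Subobject.mk (kernel.ι (cokernel.π (Subobject.ofLE B₀ A₀ hle) ≫ e.inv ≫ p) ≫
      A₀.arrow) ≤ A₀ := by
    refine Subobject.le_of_comm ((Subobject.underlyingIso _).hom ≫
      kernel.ι (cokernel.π (Subobject.ofLE B₀ A₀ hle) ≫ e.inv ≫ p)) ?_
    rw [Category.assoc]
    exact Subobject.underlyingIso_hom_comp_eq_mk _
  have hℓw : Subobject.ofLE B₀ A₀ hle ≫ cokernel.π (Subobject.ofLE B₀ A₀ hle) ≫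
      e.inv ≫ p = 0 := by
    rw [← Category.assoc (Subobject.ofLE B₀ A₀ hle) (cokernel.π _) _, cokernel.condition,
      zero_comp]
  have hℓ : kernel.lift _ (Subobject.ofLE B₀ A₀ hle) hℓw ≫
      kernel.ι (cokernel.π (Subobject.ofLE B₀ A₀ hle) ≫ e.inv ≫ p) =
      Subobject.ofLE B₀ A₀ hle := kernel.lift_ι _ _ _
  have hBA' : B₀ ≤ Subobject.mk (kernel.ι (cokernel.π (Subobject.ofLE B₀ A₀ hle) ≫
      e.inv ≫ p) ≫ A₀.arrow) := by
    refine Subobject.le_mk_of_comm (kernel.lift _ (Subobject.ofLE B₀ A₀ hle) hℓw) ?_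
    rw [← Category.assoc _ _ A₀.arrow, hℓ, Subobject.ofLE_arrow]
  have hofLE1 : Subobject.ofLE _ A₀ hA'A = (Subobject.underlyingIso _).hom ≫
      kernel.ι (cokernel.π (Subobject.ofLE B₀ A₀ hle) ≫ e.inv ≫ p) := by
    rw [← cancel_mono A₀.arrow, Subobject.ofLE_arrow, Category.assoc,
      Subobject.underlyingIso_hom_comp_eq_mk]
  have hofLE2 : Subobject.ofLE B₀ _ hBA' =
      kernel.lift _ (Subobject.ofLE B₀ A₀ hle) hℓw ≫ (Subobject.underlyingIso _).inv := by
    rw [← cancel_mono (Subobject.mk (kernel.ι (cokernel.π (Subobject.ofLE B₀ A₀ hle) ≫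
      e.inv ≫ p) ≫ A₀.arrow)).arrow, Subobject.ofLE_arrow, Category.assoc,
      Subobject.underlyingIso_arrow, ← Category.assoc _ _ A₀.arrow, hℓ,
      Subobject.ofLE_arrow]
  -- the map φ from the kernel to L
  obtain ⟨φ, hφ⟩ := hses'.exact.lift'
    (kernel.ι (cokernel.π (Subobject.ofLE B₀ A₀ hle) ≫ e.inv ≫ p) ≫
      cokernel.π (Subobject.ofLE B₀ A₀ hle))
    ((Category.assoc _ _ _).trans (kernel.condition _))
  have hφ2 : φ ≫ (i ≫ e.hom) =
      kernel.ι (cokernel.π (Subobject.ofLE B₀ A₀ hle) ≫ e.inv ≫ p) ≫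
      cokernel.π (Subobject.ofLE B₀ A₀ hle) := hφ
  have hφepi : Epi φ := by
    apply epi_of_pseudo_surjective
    intro l
    obtain ⟨a, ha⟩ := pseudo_surjective_of_epi (cokernel.π (Subobject.ofLE B₀ A₀ hle))
      (pseudoApply (i ≫ e.hom) l)
    have e1 : pseudoApply (cokernel.π (Subobject.ofLE B₀ A₀ hle) ≫ e.inv ≫ p) a = 0 := by
      rw [Abelian.Pseudoelement.comp_apply, ha, ← Abelian.Pseudoelement.comp_apply,
        hi'p', Abelian.Pseudoelement.zero_apply]
    obtain ⟨k, hk⟩ := pseudo_kernel_exact _ a e1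
    refine ⟨k, ?_⟩
    apply pseudo_injective_of_mono (i ≫ e.hom)
    rw [← Abelian.Pseudoelement.comp_apply, hφ2, Abelian.Pseudoelement.comp_apply, hk, ha]
  have hℓφ : kernel.lift _ (Subobject.ofLE B₀ A₀ hle) hℓw ≫ φ = 0 := by
    rw [← cancel_mono (i ≫ e.hom), Category.assoc _ φ _, hφ2,
      ← Category.assoc _ _ (cokernel.π _), hℓ, cokernel.condition, zero_comp]
  have wψ : Subobject.ofLE B₀ _ hBA' ≫ ((Subobject.underlyingIso _).hom ≫ φ) = 0 := by
    rw [hofLE2]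
    simp only [Category.assoc]
    rw [Iso.inv_hom_id_assoc, hℓφ]
  -- ψ is a cokernel of `ofLE B₀ A'`
  have hklim : IsLimit (KernelFork.ofι (Subobject.ofLE B₀ _ hBA') wψ) := by
    refine KernelFork.IsLimit.ofι' _ wψ ?_
    intro T t ht
    have ht' : (t ≫ (Subobject.underlyingIso _).hom ≫
        kernel.ι (cokernel.π (Subobject.ofLE B₀ A₀ hle) ≫ e.inv ≫ p)) ≫
        cokernel.π (Subobject.ofLE B₀ A₀ hle) = 0 := by
      simp only [Category.assoc]
      rw [← hφ2]
      rw [show t ≫ (Subobject.underlyingIso _).hom ≫ φ ≫ (i ≫ e.hom) =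
        (t ≫ ((Subobject.underlyingIso _).hom ≫ φ)) ≫ (i ≫ e.hom) from by
          simp only [Category.assoc], ht, zero_comp]
    refine ⟨Abelian.monoLift (Subobject.ofLE B₀ A₀ hle) _ ht', ?_⟩
    have hs := Abelian.monoLift_comp (Subobject.ofLE B₀ A₀ hle) _ ht'
    rw [← cancel_mono (Subobject.mk (kernel.ι (cokernel.π (Subobject.ofLE B₀ A₀ hle) ≫
      e.inv ≫ p) ≫ A₀.arrow)).arrow, Category.assoc, Subobject.ofLE_arrow]
    -- goal : monoLift ≫ B₀.arrow = t ≫ A'.arrow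
    rw [show (Subobject.mk (kernel.ι (cokernel.π (Subobject.ofLE B₀ A₀ hle) ≫
        e.inv ≫ p) ≫ A₀.arrow)).arrow = (Subobject.underlyingIso _).hom ≫
        (kernel.ι (cokernel.π (Subobject.ofLE B₀ A₀ hle) ≫ e.inv ≫ p) ≫ A₀.arrow) from
      (Subobject.underlyingIso_hom_comp_eq_mk _).symm]
    rw [show t ≫ (Subobject.underlyingIso _).hom ≫
        (kernel.ι (cokernel.π (Subobject.ofLE B₀ A₀ hle) ≫ e.inv ≫ p) ≫ A₀.arrow) =
        (t ≫ (Subobject.underlyingIso _).hom ≫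
          kernel.ι (cokernel.π (Subobject.ofLE B₀ A₀ hle) ≫ e.inv ≫ p)) ≫ A₀.arrow from by
      rw [Category.assoc, Category.assoc]]
    conv_rhs => rw [← hs]
    simp only [Category.assoc, Subobject.ofLE_arrow]
  have hψepi : Epi ((Subobject.underlyingIso (kernel.ι (cokernel.π (Subobject.ofLE B₀ A₀ hle) ≫ e.inv ≫ p) ≫ A₀.arrow)).hom ≫ φ) := epi_comp _ _
  have hcolL : IsColimit (CokernelCofork.ofπ ((Subobject.underlyingIso (kernel.ι (cokernel.π (Subobject.ofLE B₀ A₀ hle) ≫ e.inv ≫ p) ≫ A₀.arrow)).hom ≫ φ)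
      (KernelFork.condition _)) := Abelian.epiIsCokernelOfKernel _ hklim
  have eL : (cokernel (Subobject.ofLE B₀ _ hBA') : A) ≅ L :=
    IsColimit.coconePointUniqueUpToIso (cokernelIsCokernel _) hcolL
  -- `π ≫ p'` is a cokernel of `ofLE A' A₀`
  have wN : Subobject.ofLE _ A₀ hA'A ≫ (cokernel.π (Subobject.ofLE B₀ A₀ hle) ≫
      e.inv ≫ p) = 0 := by
    rw [hofLE1, Category.assoc _ _ _, kernel.condition, comp_zero]
  have hepi2 : Epi (cokernel.π (Subobject.ofLE B₀ A₀ hle) ≫ e.inv ≫ p) := epi_comp _ _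
  have hdesc : ∀ {T : A} (t : ((A₀ : A)) ⟶ T), Subobject.ofLE _ A₀ hA'A ≫ t = 0 →
      {s : N ⟶ T // (cokernel.π (Subobject.ofLE B₀ A₀ hle) ≫ e.inv ≫ p) ≫ s = t} := by
    intro T t ht
    have h3 : ((Subobject.underlyingIso (kernel.ι (cokernel.π (Subobject.ofLE B₀ A₀ hle) ≫ e.inv ≫ p) ≫ A₀.arrow)).hom ≫
        kernel.ι (cokernel.π (Subobject.ofLE B₀ A₀ hle) ≫ e.inv ≫ p)) ≫ t = 0 := by
      rw [← hofLE1]; exact ht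
    have h2 : kernel.ι (cokernel.π (Subobject.ofLE B₀ A₀ hle) ≫ e.inv ≫ p) ≫ t = 0 := by
      rw [← cancel_epi (Subobject.underlyingIso (kernel.ι (cokernel.π (Subobject.ofLE B₀ A₀ hle) ≫ e.inv ≫ p) ≫ A₀.arrow)).hom, comp_zero]
      exact (Category.assoc _ _ _).symm.trans h3
    have pf1 : Subobject.ofLE B₀ A₀ hle ≫ t = 0 := by
      rw [← hℓ, Category.assoc, h2, comp_zero]
    have pf2 : (i ≫ e.hom) ≫ cokernel.desc (Subobject.ofLE B₀ A₀ hle) t pf1 = 0 := by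
      rw [← cancel_epi φ, comp_zero, ← Category.assoc φ (i ≫ e.hom) _, hφ2,
        Category.assoc _ (cokernel.π _) _, cokernel.π_desc, h2]
    refine ⟨hses'.exact.desc (cokernel.desc _ t pf1) pf2, ?_⟩
    have h5 : (e.inv ≫ p) ≫ hses'.exact.desc (cokernel.desc _ t pf1) pf2 =
        cokernel.desc (Subobject.ofLE B₀ A₀ hle) t pf1 := hses'.exact.g_desc _ _
    simp only [Category.assoc] at h5 ⊢
    rw [h5, cokernel.π_desc]
  have hcolN : IsColimit (CokernelCofork.ofπ _ wN) := by
    refine CokernelCofork.IsColimit.ofπ _ wN (fun {T} t ht => (hdesc t ht).1)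
      (fun {T} t ht => (hdesc t ht).2) (fun {T} t ht m' hm => ?_)
    rw [← cancel_epi (cokernel.π (Subobject.ofLE B₀ A₀ hle) ≫ e.inv ≫ p), hm,
      (hdesc t ht).2]
  have eN : (cokernel (Subobject.ofLE _ A₀ hA'A) : A) ≅ N :=
    IsColimit.coconePointUniqueUpToIso (cokernelIsCokernel _) hcolN
  -- strictness
  have hAne : ¬ (A₀ ≤ Subobject.mk (kernel.ι (cokernel.π (Subobject.ofLE B₀ A₀ hle) ≫
      e.inv ≫ p) ≫ A₀.arrow)) := by
    intro hba
    have hIso : IsIso (Subobject.ofLE _ A₀ hA'A) :=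
      ⟨Subobject.ofLE A₀ _ hba, by rw [Subobject.ofLE_comp_ofLE, Subobject.ofLE_refl],
        by rw [Subobject.ofLE_comp_ofLE, Subobject.ofLE_refl]⟩
    have : Epi (Subobject.ofLE _ A₀ hA'A) := by infer_instance
    exact hNnz ((isZero_cokernel_of_epi _).of_iso eN.symm)
  have hBne : ¬ (Subobject.mk (kernel.ι (cokernel.π (Subobject.ofLE B₀ A₀ hle) ≫
      e.inv ≫ p) ≫ A₀.arrow) ≤ B₀) := by
    intro hba
    have hIso : IsIso (Subobject.ofLE B₀ _ hBA') :=
      ⟨Subobject.ofLE _ B₀ hba, by rw [Subobject.ofLE_comp_ofLE, Subobject.ofLE_refl],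
        by rw [Subobject.ofLE_comp_ofLE, Subobject.ofLE_refl]⟩
    have : Epi (Subobject.ofLE B₀ _ hBA') := by infer_instance
    exact hLnz ((isZero_cokernel_of_epi _).of_iso eL.symm)
  -- apply the induction hypothesis
  have hLf : FiltMem (simpSet E) L := by
    refine IH (Subobject.mk (kernel.ι (cokernel.π (Subobject.ofLE B₀ A₀ hle) ≫
      e.inv ≫ p) ≫ A₀.arrow), B₀) ⟨hA'A, le_rfl, ?_⟩ hBA' L eL.symm hL
    intro hq
    exact hAne (le_of_eq (Prod.ext_iff.mp hq).1.symm)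
  have hNf : FiltMem (simpSet E) N := by
    refine IH (A₀, Subobject.mk (kernel.ι (cokernel.π (Subobject.ofLE B₀ A₀ hle) ≫
      e.inv ≫ p) ≫ A₀.arrow)) ⟨le_rfl, hBA', ?_⟩ hA'A N eN.symm hN
    intro hq
    exact hBne (le_of_eq (Prod.ext_iff.mp hq).2)
  have hQ : FiltMem (simpSet E) (cokernel (Subobject.ofLE B₀ A₀ hle)) :=
    FiltMem.of_extension hses' hLf hNf
  exact hQ.iso e

end FiltSimp
/-! ### Assembly -/

lemma filt_kernel_cokernel {S : Set A} (hS : IsSemibrick S) {X Y : A} (f : X ⟶ Y)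
    (hX : X ∈ Filt S) (hY : Y ∈ Filt S) : kernel f ∈ Filt S ∧ cokernel f ∈ Filt S := by
  obtain ⟨a, ha⟩ := FiltMem.filtN hX
  obtain ⟨b, hb⟩ := FiltMem.filtN hY
  obtain ⟨⟨k, _, hk⟩, ⟨c, _, hc⟩⟩ := ringel_aux hS (a + b) a b f le_rfl ha hb
  exact ⟨hk.filtMem, hc.filtMem⟩

lemma semibrick_filt_wide {S : Set A} (hS : IsSemibrick S) : IsWide (Filt S) := by
  refine ⟨?_, ⟨?_, ?_⟩, ?_, ?_⟩
  · intro X Y e hX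
    exact FiltMem.iso hX e.symm
  · intro X hz
    exact FiltMem.of_isZero hz
  · intro T hT h1 h3
    exact FiltMem.of_extension hT h1 h3
  · intro X Y f hX hY
    exact (filt_kernel_cokernel hS f hX hY).1
  · intro X Y f hX hY
    exact (filt_kernel_cokernel hS f hX hY).2

lemma ext_eq_filt_simp [∀ X : A, IsNoetherianObject X] [∀ X : A, IsArtinianObject X]
    {W : Set A} (hiso : IsoClosedSet W) (hext : ExtClosed W) : Filt (simpSet W) = W := by
  apply Set.Subset.antisymm
  · exact filt_subset hiso hext (fun X hX => hX.1)
  · intro X hX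
    exact ext_closed_filt_simp hiso hext X hX

theorem statement6 [∀ X : A, IsNoetherianObject X] [∀ X : A, IsArtinianObject X] :
    (∀ W : Set A, IsoClosedSet W → ExtClosed W →
      ((IsWide W ↔ IsSemibrick (simpSet W)) ∧ (IsWide W → Filt (simpSet W) = W))) ∧
    (∀ S : Set A, IsSemibrick S → IsWide (Filt S) ∧ simpSet (Filt S) = S) := by
  constructor
  · intro W hiso hext
    have hfe : Filt (simpSet W) = W := ext_eq_filt_simp hiso hext
    refine ⟨⟨fun hW => wide_simp_semibrick hW, fun hsb => ?_⟩, fun _ => hfe⟩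
    have := semibrick_filt_wide hsb
    rwa [hfe] at this
  · intro S hsb
    exact ⟨semibrick_filt_wide hsb, semibrick_simp_filt hsb⟩

end MonobrickPaper
end

section
/- A subcategory E of a length abelian category A is left Schur if and only if there exist a torsion-free class F of A and a subset M of simp(F) such that E = Filt(M). -/
open CategoryTheory CategoryTheory.Limits

namespace MonobrickPaper

universe v u

variable {A : Type u} [Category.{v} A] [Abelian A]

section Auxiliary

lemma shortExact_ker {X Y : A} (p : X ⟶ Y) [Epi p] :
    (ShortComplex.mk (kernel.ι p) p (kernel.condition p)).ShortExact where
  exact := ShortComplex.exact_of_f_is_kernel _ (kernelIsKernel p)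

lemma shortExact_coker {X Y : A} (i : X ⟶ Y) [Mono i] :
    (ShortComplex.mk i (cokernel.π i) (cokernel.condition i)).ShortExact where
  exact := ShortComplex.exact_of_g_is_cokernel _ (cokernelIsCokernel i)

lemma exists_iso_kernel {S : ShortComplex A} (hS : S.ShortExact) :
    ∃ e : S.X₁ ≅ kernel S.g, e.hom ≫ kernel.ι S.g = S.f := by
  haveI := hS.mono_f
  refine ⟨Iso.mk (kernel.lift S.g S.f S.zero)
    (hS.exact.lift (kernel.ι S.g) (kernel.condition S.g)) ?_ ?_, by simp⟩
  · rw [← cancel_mono S.f]; simp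
  · rw [← cancel_mono (kernel.ι S.g)]; simp

lemma exists_iso_cokernel {S : ShortComplex A} (hS : S.ShortExact) :
    ∃ e : cokernel S.f ≅ S.X₃, cokernel.π S.f ≫ e.hom = S.g := by
  haveI := hS.epi_g
  refine ⟨Iso.mk (cokernel.desc S.f S.g S.zero)
    (hS.exact.desc (cokernel.π S.f) (cokernel.condition S.f)) ?_ ?_, by simp⟩
  · rw [← cancel_epi (cokernel.π S.f)]; simp
  · rw [← cancel_epi S.g]; simp

lemma FiltMem.of_iso' {C : Set A} {X : A} (h : FiltMem C X) :
    ∀ {X' : A}, (X' ≅ X) → FiltMem C X' := by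
  induction h with
  | @of_iso X Y hY e => exact fun e' => .of_iso hY (e'.trans e)
  | of_isZero hz => exact fun e' => .of_isZero (hz.of_iso e')
  | @of_extension S hS h1 h3 ih1 ih3 =>
      intro X' e
      have w2 : (S.f ≫ e.inv) ≫ (e.hom ≫ S.g) = 0 := by
        rw [Category.assoc, Iso.inv_hom_id_assoc, S.zero]
      exact FiltMem.of_extension (S := ShortComplex.mk _ _ w2)
        (ShortComplex.shortExact_of_iso
          (ShortComplex.isoMk (S₁ := S) (S₂ := ShortComplex.mk _ _ w2)
            (Iso.refl _) e.symm (Iso.refl _) (by simp) (by simp)) hS)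
        h1 h3

lemma FiltMem.mem_of_subset {C D : Set A} (hCD : C ⊆ D) (hiso : IsoClosedSet D)
    (hext : ExtClosed D) {X : A} (h : FiltMem C X) : X ∈ D := by
  induction h with
  | of_iso h e => exact hiso e.symm (hCD h)
  | of_isZero h => exact hext.1 _ h
  | @of_extension S hS h1 h3 ih1 ih3 => exact hext.2 S hS ih1 ih3

lemma simpleIn_of_iso {E : Set A} {X X' : A} (e : X ≅ X') (h : SimpleIn E X) :
    SimpleIn E X' := by
  refine ⟨fun hz => h.1 (hz.of_iso e), ?_⟩
  intro L N i p w hSE hL hN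
  have w' : (i ≫ e.inv) ≫ (e.hom ≫ p) = 0 := by
    rw [Category.assoc, Iso.inv_hom_id_assoc, w]
  refine h.2 (i ≫ e.inv) (e.hom ≫ p) w' ?_ hL hN
  exact ShortComplex.shortExact_of_iso
    (ShortComplex.isoMk (S₁ := ShortComplex.mk i p w) (S₂ := ShortComplex.mk _ _ w')
      (Iso.refl _) e.symm (Iso.refl _) (by simp) (by simp)) hSE

lemma simpleIn_filt_mem {M : Set A} {X : A} (h : FiltMem M X) :
    SimpleIn (Filt M) X → ∃ B ∈ M, Nonempty (X ≅ B) := by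
  induction h with
  | @of_iso X Y hY e => exact fun _ => ⟨Y, hY, ⟨e⟩⟩
  | of_isZero hz => exact fun hs => absurd hz hs.1
  | @of_extension S hS h1 h3 ih1 ih3 =>
      intro hs
      rcases hs.2 S.f S.g S.zero hS h1 h3 with hz | hz
      · have hf : S.f = 0 := hz.eq_zero_of_src _
        haveI := hS.epi_g
        haveI : Mono S.g := hS.exact.mono_g hf
        haveI : IsIso S.g := isIso_of_mono_of_epi _
        obtain ⟨B, hB, ⟨e⟩⟩ := ih3 (simpleIn_of_iso (asIso S.g) hs)
        exact ⟨B, hB, ⟨(asIso S.g).trans e⟩⟩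
      · have hg : S.g = 0 := hz.eq_zero_of_tgt _
        haveI := hS.mono_f
        haveI : Epi S.f := hS.exact.epi_f hg
        haveI : IsIso S.f := isIso_of_mono_of_epi _
        obtain ⟨B, hB, ⟨e⟩⟩ := ih1 (simpleIn_of_iso (asIso S.f).symm hs)
        exact ⟨B, hB, ⟨(asIso S.f).symm.trans e⟩⟩

lemma exists_epi_top {C : Set A} {X : A} (h : FiltMem C X) :
    ¬ IsZero X → ∃ (B : A) (r : X ⟶ B), B ∈ C ∧ ¬ IsZero B ∧ Epi r := by
  induction h with
  | @of_iso X Y hY e =>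
      exact fun hX => ⟨Y, e.hom, hY, fun hz => hX (hz.of_iso e), inferInstance⟩
  | of_isZero hz => exact fun hX => absurd hz hX
  | @of_extension S hS h1 h3 ih1 ih3 =>
      intro hX
      by_cases h3z : IsZero S.X₃
      · have hg : S.g = 0 := h3z.eq_zero_of_tgt _
        haveI := hS.mono_f
        haveI : Epi S.f := hS.exact.epi_f hg
        haveI : IsIso S.f := isIso_of_mono_of_epi _
        obtain ⟨B, r, hB, hBnz, hr⟩ := ih1 (fun hz => hX (hz.of_iso (asIso S.f).symm))
        haveI := hr
        exact ⟨B, inv S.f ≫ r, hB, hBnz, epi_comp _ _⟩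
      · obtain ⟨B, r, hB, hBnz, hr⟩ := ih3 h3z
        haveI := hr; haveI := hS.epi_g
        exact ⟨B, S.g ≫ r, hB, hBnz, epi_comp _ _⟩

lemma sub_of_extension {S : ShortComplex A} (hS : S.ShortExact) {W : A} (u : W ⟶ S.X₂)
    (hu : Mono u) :
    ∃ (W₁ W₃ : A) (i : W₁ ⟶ W) (p : W ⟶ W₃) (w : i ≫ p = 0)
      (a : W₁ ⟶ S.X₁) (_ : Mono a) (c : W₃ ⟶ S.X₃) (_ : Mono c),
      (ShortComplex.mk i p w).ShortExact := by
  haveI := hu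
  haveI := hS.mono_f
  have hzero : (kernel.ι (Abelian.factorThruImage (u ≫ S.g)) ≫ u) ≫ S.g = 0 := by
    have h := kernel.condition_assoc (Abelian.factorThruImage (u ≫ S.g))
      (Abelian.image.ι (u ≫ S.g))
    simpa [Abelian.image.fac] using h
  set a := hS.exact.lift (kernel.ι (Abelian.factorThruImage (u ≫ S.g)) ≫ u) hzero with ha
  haveI : Mono (a ≫ S.f) := by rw [ha, ShortComplex.Exact.lift_f]; exact mono_comp _ _
  exact ⟨kernel (Abelian.factorThruImage (u ≫ S.g)), Abelian.image (u ≫ S.g),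
    kernel.ι _, Abelian.factorThruImage (u ≫ S.g), kernel.condition _,
    a, mono_of_mono a S.f, Abelian.image.ι (u ≫ S.g), inferInstance, shortExact_ker _⟩

lemma filtMem_sub {C : Set A} (hC : ∀ ⦃W Z : A⦄ (g : W ⟶ Z), Mono g → Z ∈ C → W ∈ C)
    {X : A} (h : FiltMem C X) : ∀ {W : A} (u : W ⟶ X), Mono u → FiltMem C W := by
  induction h with
  | @of_iso X Y hY e =>
      intro W u hu
      haveI := hu
      exact .of_iso (hC (u ≫ e.hom) (mono_comp _ _) hY) (Iso.refl W)
  | of_isZero hz =>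
      intro W u hu
      haveI := hu
      exact .of_isZero (IsZero.of_mono_eq_zero u (hz.eq_zero_of_tgt u))
  | @of_extension S hS h1 h3 ih1 ih3 =>
      intro W u hu
      obtain ⟨W₁, W₃, i, p, w, a, ha, c, hc, hSES⟩ := sub_of_extension hS u hu
      exact .of_extension hSES (ih1 a ha) (ih3 c hc)

lemma tf_simple_hom {F : Set A} (hF : IsTorsionFreeClass F) {B : A} (hB : B ∈ F)
    (hs : SimpleIn F B) {Y : A} (hY : Y ∈ F) (f : B ⟶ Y) : f = 0 ∨ Mono f := by
  have hker : kernel (Abelian.factorThruImage f) ∈ F :=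
    hF.2.2 (kernel.ι _) inferInstance hB
  have himg : Abelian.image f ∈ F := hF.2.2 (Abelian.image.ι f) inferInstance hY
  rcases hs.2 (kernel.ι (Abelian.factorThruImage f)) (Abelian.factorThruImage f)
    (kernel.condition _) (shortExact_ker _) hker himg with h | h
  · right
    haveI : Mono (Abelian.factorThruImage f) := Preadditive.mono_of_isZero_kernel _ h
    rw [← Abelian.image.fac f]
    exact mono_comp _ _
  · left
    rw [← Abelian.image.fac f, h.eq_zero_of_src (Abelian.image.ι f), comp_zero]

end Auxiliary

section KernelComp

attribute [local instance] CategoryTheory.Abelian.Pseudoelement.objectToSort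
  CategoryTheory.Abelian.Pseudoelement.homToFun

open CategoryTheory.Abelian

lemma kernel_comp_shortExact {Y N N' : A} (q : Y ⟶ N) (p : N ⟶ N') [Epi q] :
    ∃ (a : kernel q ⟶ kernel (q ≫ p)) (b : kernel (q ≫ p) ⟶ kernel p) (w : a ≫ b = 0),
      (ShortComplex.mk a b w).ShortExact ∧ a ≫ kernel.ι (q ≫ p) = kernel.ι q := by
  have haz : kernel.ι q ≫ q ≫ p = 0 := by
    rw [← Category.assoc, kernel.condition, zero_comp]
  have hbz : (kernel.ι (q ≫ p) ≫ q) ≫ p = 0 := by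
    rw [Category.assoc]; exact kernel.condition _
  set a : kernel q ⟶ kernel (q ≫ p) := kernel.lift (q ≫ p) (kernel.ι q) haz with hadef
  set b : kernel (q ≫ p) ⟶ kernel p := kernel.lift p (kernel.ι (q ≫ p) ≫ q) hbz with hbdef
  have ha : a ≫ kernel.ι (q ≫ p) = kernel.ι q := by rw [hadef, kernel.lift_ι]
  have hb : b ≫ kernel.ι p = kernel.ι (q ≫ p) ≫ q := by rw [hbdef, kernel.lift_ι]
  have w : a ≫ b = 0 := by
    rw [← cancel_mono (kernel.ι p), Category.assoc, hb, ← Category.assoc, ha,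
      kernel.condition, zero_comp]
  haveI : Mono (a ≫ kernel.ι (q ≫ p)) := by rw [ha]; infer_instance
  haveI hma : Mono a := mono_of_mono a (kernel.ι (q ≫ p))
  have hexact0 : (ShortComplex.mk (kernel.ι (q ≫ p)) (q ≫ p) (kernel.condition _)).Exact :=
    ShortComplex.exact_of_f_is_kernel _ (kernelIsKernel _)
  have hexactq : (ShortComplex.mk (kernel.ι q) q (kernel.condition q)).Exact :=
    ShortComplex.exact_of_f_is_kernel _ (kernelIsKernel q)
  have hepib : Epi b := by
    apply Pseudoelement.epi_of_pseudo_surjective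
    intro x
    obtain ⟨y, hy⟩ := Pseudoelement.pseudo_surjective_of_epi q ((kernel.ι p) x)
    have hy0 : (q ≫ p) y = 0 := by
      rw [Pseudoelement.comp_apply, hy, ← Pseudoelement.comp_apply, kernel.condition,
        Pseudoelement.zero_apply]
    obtain ⟨z, hz⟩ := Pseudoelement.pseudo_exact_of_exact hexact0 y hy0
    refine ⟨z, Pseudoelement.pseudo_injective_of_mono (kernel.ι p) ?_⟩
    rw [← Pseudoelement.comp_apply, hb, Pseudoelement.comp_apply, hz, hy]
  have hexact : (ShortComplex.mk a b w).Exact := by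
    apply Pseudoelement.exact_of_pseudo_exact
    intro x hx
    have h1 : q ((kernel.ι (q ≫ p)) x) = 0 := by
      rw [← Pseudoelement.comp_apply, ← hb, Pseudoelement.comp_apply, hx,
        Pseudoelement.apply_zero]
    obtain ⟨k, hk⟩ := Pseudoelement.pseudo_exact_of_exact hexactq _ h1
    refine ⟨k, Pseudoelement.pseudo_injective_of_mono (kernel.ι (q ≫ p)) ?_⟩
    rw [← Pseudoelement.comp_apply, ha, hk]
  exact ⟨a, b, w, { exact := hexact, mono_f := hma, epi_g := hepib }, ha⟩

end KernelComp

lemma exists_simple_top {E : Set A} (hiso : IsoClosedSet E) (hext : ExtClosed E)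
    {Y : A} [IsNoetherianObject Y] (hY : Y ∈ E) (hYnz : ¬ IsZero Y) :
    ∃ (L N : A) (i : L ⟶ Y) (p : Y ⟶ N) (w : i ≫ p = 0),
      (ShortComplex.mk i p w).ShortExact ∧ L ∈ E ∧ N ∈ E ∧ SimpleIn E N := by
  classical
  set T : Set (Subobject Y) :=
    {K | ((K : A) ∈ E) ∧ cokernel K.arrow ∈ E ∧ ¬ IsZero (cokernel K.arrow)} with hT
  have hbotiso : Y ≅ cokernel (⊥ : Subobject Y).arrow :=
    ((cokernelIsoOfEq Subobject.bot_arrow).trans cokernelZeroIsoTarget).symm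
  have hbot : (⊥ : Subobject Y) ∈ T := by
    refine ⟨hext.1 _ ((isZero_zero A).of_iso Subobject.botCoeIsoZero), hiso hbotiso hY,
      fun h => hYnz (h.of_iso hbotiso)⟩
  obtain ⟨K, hK, hKmax⟩ := (wellFounded_gt (α := Subobject Y)).has_min T ⟨⊥, hbot⟩
  refine ⟨(K : A), cokernel K.arrow, K.arrow, cokernel.π K.arrow, cokernel.condition _,
    shortExact_coker K.arrow, hK.1, hK.2.1, hK.2.2, ?_⟩
  intro L' N' i' p' w' hSE' hL' hN'
  by_contra hcon
  obtain ⟨hL'nz, hN'nz⟩ := not_or.mp hcon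
  set q : Y ⟶ cokernel K.arrow := cokernel.π K.arrow with hq
  haveI := hSE'.epi_g
  haveI : Epi (q ≫ p') := epi_comp _ _
  obtain ⟨a, b, wab, hSab, ha⟩ := kernel_comp_shortExact q p'
  obtain ⟨e₁, he₁⟩ := exists_iso_kernel (shortExact_coker K.arrow)
  obtain ⟨e₂, he₂⟩ := exists_iso_kernel hSE'
  have hKq : kernel q ∈ E := hiso e₁ hK.1
  have hLp : kernel p' ∈ E := hiso e₂ hL'
  have hK'E : kernel (q ≫ p') ∈ E := hext.2 _ hSab hKq hLp
  have hle : K ≤ Subobject.mk (kernel.ι (q ≫ p')) := by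
    refine Subobject.le_mk_of_comm (e₁.hom ≫ a) ?_
    rw [Category.assoc, ha, he₁]
  have hne : K ≠ Subobject.mk (kernel.ι (q ≫ p')) := by
    intro heq
    have h2 : Subobject.mk (kernel.ι (q ≫ p')) ≤ K := heq ▸ le_rfl
    set c := Subobject.ofMkLE (kernel.ι (q ≫ p')) K h2 with hcdef
    have hc : c ≫ K.arrow = kernel.ι (q ≫ p') := Subobject.ofMkLE_arrow h2
    set d : kernel (q ≫ p') ⟶ kernel q := c ≫ e₁.hom with hddef
    have hd : d ≫ kernel.ι q = kernel.ι (q ≫ p') := by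
      rw [hddef, Category.assoc, he₁, hc]
    have had : a ≫ d = 𝟙 (kernel q) := by
      rw [← cancel_mono (kernel.ι q), Category.assoc, hd, ha, Category.id_comp]
    have hda : d ≫ a = 𝟙 (kernel (q ≫ p')) := by
      rw [← cancel_mono (kernel.ι (q ≫ p')), Category.assoc, ha, hd, Category.id_comp]
    haveI : IsIso a := ⟨d, had, hda⟩
    have hb0 : b = 0 := by
      rw [← cancel_epi a, wab, comp_zero]
    haveI := hSab.epi_g
    exact hL'nz ((IsZero.of_epi_eq_zero b hb0).of_iso e₂)
  have harr : (Subobject.mk (kernel.ι (q ≫ p'))).arrow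
      = (Subobject.underlyingIso (kernel.ι (q ≫ p'))).hom ≫ kernel.ι (q ≫ p') :=
    (Subobject.underlyingIso_hom_comp_eq_mk _).symm
  obtain ⟨e₄, he₄⟩ := exists_iso_cokernel (shortExact_ker (q ≫ p'))
  have e₃ : cokernel (Subobject.mk (kernel.ι (q ≫ p'))).arrow ≅ N' :=
    ((cokernelIsoOfEq harr).trans
      (cokernelEpiComp (Subobject.underlyingIso (kernel.ι (q ≫ p'))).hom
        (kernel.ι (q ≫ p')))).trans e₄
  have hmem : Subobject.mk (kernel.ι (q ≫ p')) ∈ T := by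
    refine ⟨hiso (Subobject.underlyingIso (kernel.ι (q ≫ p'))).symm hK'E,
      hiso e₃.symm hN', fun h => hN'nz (h.of_iso e₃.symm)⟩
  exact hKmax _ hmem (lt_of_le_of_ne hle hne)

lemma mem_filt_simp {E : Set A} (hiso : IsoClosedSet E) (hext : ExtClosed E)
    [∀ X : A, IsNoetherianObject X] [∀ X : A, IsArtinianObject X] {X : A} (hX : X ∈ E) :
    FiltMem (simpSet E) X := by
  have key : ∀ s : Subobject X, (s : A) ∈ E → FiltMem (simpSet E) (s : A) := by
    intro s
    refine (wellFounded_lt (α := Subobject X)).induction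
      (C := fun s => (s : A) ∈ E → FiltMem (simpSet E) ((s : A))) s ?_
    intro t IH ht
    by_cases hz : IsZero ((t : A))
    · exact .of_isZero hz
    obtain ⟨L, N, i, p, w, hSE, hL, hN, hNs⟩ := exists_simple_top hiso hext ht hz
    haveI := hSE.mono_f
    have hFN : FiltMem (simpSet E) N := .of_iso ⟨hN, hNs⟩ (Iso.refl N)
    have hFL : FiltMem (simpSet E) L := by
      by_cases hLz : IsZero L
      · exact .of_isZero hLz
      haveI : Mono (i ≫ t.arrow) := mono_comp _ _
      have hle : Subobject.mk (i ≫ t.arrow) ≤ t := Subobject.mk_le_of_comm i rfl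
      have hlt : Subobject.mk (i ≫ t.arrow) < t := by
        refine lt_of_le_of_ne hle (fun heq => ?_)
        have h2 : t ≤ Subobject.mk (i ≫ t.arrow) := le_of_eq heq.symm
        have hc : Subobject.ofLEMk t (i ≫ t.arrow) h2 ≫ (i ≫ t.arrow) = t.arrow :=
          Subobject.ofLEMk_comp h2
        have hci : Subobject.ofLEMk t (i ≫ t.arrow) h2 ≫ i = 𝟙 _ := by
          rw [← cancel_mono t.arrow, Category.assoc, hc, Category.id_comp]
        haveI : Epi (Subobject.ofLEMk t (i ≫ t.arrow) h2 ≫ i) := by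
          rw [hci]; infer_instance
        haveI : Epi i := epi_of_epi (Subobject.ofLEMk t (i ≫ t.arrow) h2) i
        have hp0 : p = 0 := hSE.exact.epi_f_iff.mp inferInstance
        haveI := hSE.epi_g
        exact hNs.1 (IsZero.of_epi_eq_zero p hp0)
      have htE : ((Subobject.mk (i ≫ t.arrow) : Subobject X) : A) ∈ E :=
        hiso (Subobject.underlyingIso (i ≫ t.arrow)).symm hL
      exact (IH _ hlt htE).of_iso' (Subobject.underlyingIso (i ≫ t.arrow)).symm
    exact .of_extension hSE hFL hFN
  have htop : ((⊤ : Subobject X) : A) ∈ E := hiso (asIso (⊤ : Subobject X).arrow).symm hX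
  exact (key ⊤ htop).of_iso' (asIso (⊤ : Subobject X).arrow).symm


theorem statement12 [∀ X : A, IsNoetherianObject X] [∀ X : A, IsArtinianObject X] (E : Set A) :
    IsLeftSchur E ↔
      ∃ (F M : Set A), IsTorsionFreeClass F ∧ M ⊆ simpSet F ∧ E = Filt M := by
  constructor
  · rintro ⟨hiso, hext, hLS⟩
    refine ⟨Filt (subClosure E), simpSet E, ⟨?_, ?_, ?_⟩, ?_, ?_⟩
    · -- `Filt (subClosure E)` is iso-closed
      intro X Y e hX
      exact FiltMem.of_iso' hX e.symm
    · -- `Filt (subClosure E)` is extension-closed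
      exact ⟨fun X h => .of_isZero h, fun S hS h1 h3 => .of_extension hS h1 h3⟩
    · -- `Filt (subClosure E)` is closed under subobjects
      intro X Y f hf hY
      refine filtMem_sub ?_ hY f hf
      rintro W Z g hg ⟨Y₀, hY₀, m, hm⟩
      haveI := hg; haveI := hm
      exact ⟨Y₀, hY₀, g ≫ m, mono_comp _ _⟩
    · -- `simpSet E ⊆ simpSet (Filt (subClosure E))`
      rintro B ⟨hBE, hBs⟩
      refine ⟨.of_iso ⟨B, hBE, 𝟙 B, inferInstance⟩ (Iso.refl B), hBs.1, ?_⟩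
      intro L N i p w hSE hL hN
      by_contra hcon
      obtain ⟨hLnz, hNnz⟩ := not_or.mp hcon
      obtain ⟨B', r, hB'C, hB'nz, hr⟩ := exists_epi_top hN hNnz
      obtain ⟨Y₀, hY₀, m, hm⟩ := hB'C
      haveI := hSE.epi_g; haveI := hr; haveI := hm; haveI := hSE.mono_f
      rcases (hLS B hBE hBs).2 hY₀ (p ≫ r ≫ m) with h0 | hmono
      · have hm0 : m = 0 := zero_of_epi_comp (p ≫ r) (by rwa [Category.assoc])
        exact hB'nz (IsZero.of_mono_eq_zero m hm0)
      · haveI := hmono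
        have hi0 : i ≫ p ≫ r ≫ m = 0 := by
          rw [← Category.assoc, w, zero_comp]
        exact hLnz (IsZero.of_mono_eq_zero i (zero_of_comp_mono (p ≫ r ≫ m) hi0))
    · -- `E = Filt (simpSet E)`
      apply Set.Subset.antisymm
      · intro X hX
        exact mem_filt_simp hiso hext hX
      · intro X hX
        exact FiltMem.mem_of_subset (fun Z hZ => hZ.1) hiso hext hX
  · rintro ⟨F, M, hF, hM, rfl⟩
    refine ⟨?_, ⟨fun X h => .of_isZero h, fun S hS h1 h3 => .of_extension hS h1 h3⟩, ?_⟩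
    · intro X Y e hX
      exact FiltMem.of_iso' hX e.symm
    · intro X hX hsimp
      refine ⟨hsimp.1, ?_⟩
      intro Y hY f
      obtain ⟨B, hB, ⟨e⟩⟩ := simpleIn_filt_mem hX hsimp
      have hBF := hM hB
      have hYF : Y ∈ F := FiltMem.mem_of_subset (fun Z hZ => (hM hZ).1) hF.1 hF.2.1 hY
      have hfe : f = e.hom ≫ e.inv ≫ f := by simp
      rcases tf_simple_hom hF hBF.1 hBF.2 hYF (e.inv ≫ f) with h0 | hmono
      · left
        rw [hfe, h0, comp_zero]
      · right
        haveI := hmono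
        rw [hfe]
        exact mono_comp _ _

end MonobrickPaper
end
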